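/- arXiv:2401.14449 — 4 statements merged into one kernel-verified Lean document; each statement's English description precedes it below -/
import Mathlib

section
/- Let H be a complex inner product space with operators L̂₀, L̂₁, L̂₋₁ satisfying L̂₁† = L̂₋₁ and [L̂₁, L̂₋₁] = 2 L̂₀. Suppose ψ ≠ 0 satisfies L̂₀ ψ = ĥ • ψ, L̂₀ ∘ L̂₁ = L̂₁ ∘ (L̂₀ − 1) (i.e., L̂₁ lowers L̂₀-eigenvalues by 1), and there exists a natural number P such that L̂₁^P ψ ≠ 0 and L̂₁^(P+1) ψ = 0. Then ĥ ≥ P ≥ 0. -/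
theorem stmt_7 {H : Type*} [NormedAddCommGroup H] [InnerProductSpace ℂ H]
    (L0 L1 Lm1 : Module.End ℂ H)
    (hadj : ∀ x y : H, (inner ℂ (L1 x) y : ℂ) = inner ℂ x (Lm1 y))
    (hcomm : L1 * Lm1 - Lm1 * L1 = (2 : ℂ) • L0)
    (hlower : L0 * L1 = L1 * (L0 - 1))
    (ψ : H) (hψ : ψ ≠ 0) (hhat : ℝ) (hwt : L0 ψ = (hhat : ℂ) • ψ)
    (P : ℕ) (hP : (L1 ^ P) ψ ≠ 0) (hP1 : (L1 ^ (P + 1)) ψ = 0) :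
    (P : ℝ) ≤ hhat ∧ (0 : ℝ) ≤ (P : ℝ) := by
  have eig : ∀ n : ℕ, L0 ((L1 ^ n) ψ) = ((hhat : ℂ) - n) • (L1 ^ n) ψ := by
    intro n
    induction n with
    | zero => simpa using hwt
    | succ n ih =>
      have h1 : (L1 ^ (n + 1)) ψ = L1 ((L1 ^ n) ψ) := by
        rw [pow_succ']; rfl
      have h2 := congrArg (fun f : Module.End ℂ H => f ((L1 ^ n) ψ)) hlower
      simp only [Module.End.mul_apply] at h2
      rw [h1, h2]
      have h3 : (L0 - 1) ((L1 ^ n) ψ) = ((hhat : ℂ) - n - 1) • (L1 ^ n) ψ := by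
        simp only [LinearMap.sub_apply, Module.End.one_apply, ih, sub_smul, one_smul]
      rw [h3, map_smul]
      push_cast
      ring_nf
  set φ := (L1 ^ P) ψ with hφ
  have hL1φ : L1 φ = 0 := by
    have : (L1 ^ (P + 1)) ψ = L1 ((L1 ^ P) ψ) := by rw [pow_succ']; rfl
    rw [← this]; exact hP1
  have hL0φ : L0 φ = ((hhat : ℂ) - P) • φ := eig P
  have hc := congrArg (fun f : Module.End ℂ H => f φ) hcomm
  simp only [LinearMap.sub_apply, Module.End.mul_apply, LinearMap.smul_apply] at hc
  have hinner := congrArg (fun x : H => (inner ℂ φ x : ℂ)) hc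
  simp only [inner_sub_right, inner_smul_right] at hinner
  have e1 : (inner ℂ φ (L1 (Lm1 φ)) : ℂ) = (‖Lm1 φ‖ : ℂ) ^ 2 := by
    rw [← inner_conj_symm, hadj]
    rw [inner_self_eq_norm_sq_to_K]
    simp
  have e2 : (inner ℂ φ (Lm1 (L1 φ)) : ℂ) = 0 := by
    rw [← hadj, hL1φ, inner_zero_left]
  rw [e1, e2, hL0φ, inner_smul_right, inner_self_eq_norm_sq_to_K] at hinner
  have hnorm : (0:ℝ) < ‖φ‖ ^ 2 := pow_pos (norm_pos_iff.mpr hP) 2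
  have hR : (‖Lm1 φ‖ ^ 2 : ℝ) - 0 = 2 * ((hhat - P) * ‖φ‖ ^ 2) := by
    have h' : (Complex.ofReal ‖Lm1 φ‖) ^ 2 - 0
        = 2 * ((Complex.ofReal hhat - (P : ℂ)) * (Complex.ofReal ‖φ‖) ^ 2) := hinner
    exact_mod_cast h'
  have key : (0:ℝ) ≤ hhat - P := by nlinarith [sq_nonneg ‖Lm1 φ‖]
  exact ⟨by linarith, by positivity⟩
end

section
/- Let k_N > 0, and let ψ, φ : [0, z_h] → ℝ be differentiable, f(z) = 1 − z/z_h, 𝔣 : ℝ → ℝ positive, M : ℝ → ℝ differentiable, Q ∈ ℝ. Then for every z the pointwise identity holds: (1/(2k_N))(f ψ' + f')² + ½ f² (φ')² + ½ e^{2ψ} 𝔣(φ) Q² = (k_N/2)·[(f ψ' + f')/k_N + e^ψ M(φ)]² + ½·[f φ' + e^ψ M'(φ)]² + ½ e^{2ψ}·[𝔣(φ) Q² − k_N M(φ)² − M'(φ)²] − d/dz [f e^ψ M(φ)]. -/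
open Real

theorem stmt_14 (kN zh Q : ℝ) (hkN : 0 < kN) (hzh : 0 < zh)
    (ψ φ M 𝔣 : ℝ → ℝ) (f : ℝ → ℝ) (hf : f = fun z => 1 - z / zh)
    (hψ : Differentiable ℝ ψ) (hφ : Differentiable ℝ φ) (hM : Differentiable ℝ M)
    (h𝔣 : ∀ x, 0 < 𝔣 x) :
    ∀ z : ℝ,
      1 / (2 * kN) * (f z * deriv ψ z + deriv f z)^2
        + 1 / 2 * (f z)^2 * (deriv φ z)^2
        + 1 / 2 * Real.exp (2 * ψ z) * 𝔣 (φ z) * Q^2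
      = kN / 2 * ((f z * deriv ψ z + deriv f z) / kN + Real.exp (ψ z) * M (φ z))^2
        + 1 / 2 * (f z * deriv φ z + Real.exp (ψ z) * deriv M (φ z))^2
        + 1 / 2 * Real.exp (2 * ψ z) *
            (𝔣 (φ z) * Q^2 - kN * (M (φ z))^2 - (deriv M (φ z))^2)
        - deriv (fun z => f z * Real.exp (ψ z) * M (φ z)) z := by
  intro z
  have hfd : Differentiable ℝ f := by
    rw [hf]; exact (differentiable_const 1).sub (differentiable_id.div_const zh)
  have hd : deriv (fun z => f z * Real.exp (ψ z) * M (φ z)) z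
      = deriv f z * Real.exp (ψ z) * M (φ z)
        + f z * (Real.exp (ψ z) * deriv ψ z) * M (φ z)
        + f z * Real.exp (ψ z) * (deriv M (φ z) * deriv φ z) := by
    have h1 : HasDerivAt (fun z => Real.exp (ψ z)) (Real.exp (ψ z) * deriv ψ z) z :=
      (Real.hasDerivAt_exp (ψ z)).comp z (hψ z).hasDerivAt
    have h2 : HasDerivAt (fun z => M (φ z)) (deriv M (φ z) * deriv φ z) z :=
      (hM (φ z)).hasDerivAt.comp z (hφ z).hasDerivAt
    have := (show HasDerivAt (fun z => f z * Real.exp (ψ z) * M (φ z)) ((deriv f z * Real.exp (ψ z) + f z * (Real.exp (ψ z) * deriv ψ z)) * M (φ z) + f z * Real.exp (ψ z) * (deriv M (φ z) * deriv φ z)) z from ((hfd z).hasDerivAt.mul h1).mul h2).deriv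
    rw [this]; ring
  rw [hd, show Real.exp (2 * ψ z) = Real.exp (ψ z) * Real.exp (ψ z) by
    rw [← Real.exp_add]; ring_nf]
  field_simp
  ring
end

section
/- With the setup of the Bogomol'nyi identity: let k_N > 0, z_h > 0, f(z) = 1 − z/z_h, ψ, φ : [0, z_h] → ℝ differentiable with ψ(0) = 0, 𝔣 : ℝ → ℝ, Q ∈ ℝ, and M : ℝ → ℝ differentiable satisfying 𝔣(x) Q² − k_N M(x)² − M'(x)² ≥ 0 for all x. Then the functional Ŝ = ∫₀^{z_h} [ (1/(2k_N))(f ψ' + f')² + ½ f² (φ')² + ½ e^{2ψ} 𝔣(φ) Q² ] dz satisfies Ŝ ≥ M(φ(0)), provided all integrands are integrable and e^ψ M(φ) is bounded near z_h. -/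
open Real intervalIntegral

theorem stmt_15 (kN zh Q : ℝ) (hkN : 0 < kN) (hzh : 0 < zh)
    (ψ φ M 𝔣 : ℝ → ℝ) (f : ℝ → ℝ) (hf : f = fun z => 1 - z / zh)
    (hψ : Differentiable ℝ ψ) (hφ : Differentiable ℝ φ) (hM : Differentiable ℝ M)
    (hψ0 : ψ 0 = 0)
    (hnoforce : ∀ x : ℝ, 0 ≤ 𝔣 x * Q^2 - kN * (M x)^2 - (deriv M x)^2)
    (hint : IntervalIntegrable (fun z =>
        1 / (2 * kN) * (f z * deriv ψ z + deriv f z)^2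
          + 1 / 2 * (f z)^2 * (deriv φ z)^2
          + 1 / 2 * Real.exp (2 * ψ z) * 𝔣 (φ z) * Q^2)
      MeasureTheory.volume 0 zh)
    (hintD : IntervalIntegrable (deriv (fun z => f z * Real.exp (ψ z) * M (φ z)))
      MeasureTheory.volume 0 zh)
    (hbdd : ∃ B : ℝ, ∀ z ∈ Set.Icc (0 : ℝ) zh, |Real.exp (ψ z) * M (φ z)| ≤ B) :
    M (φ 0) ≤ ∫ z in (0 : ℝ)..zh,
        (1 / (2 * kN) * (f z * deriv ψ z + deriv f z)^2
          + 1 / 2 * (f z)^2 * (deriv φ z)^2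
          + 1 / 2 * Real.exp (2 * ψ z) * 𝔣 (φ z) * Q^2) := by
  set g : ℝ → ℝ := fun z => f z * Real.exp (ψ z) * M (φ z) with hg
  have hfD : ∀ z : ℝ, HasDerivAt f (-(1 / zh)) z := by
    intro z
    rw [hf]
    simpa using ((hasDerivAt_id z).div_const zh).const_sub 1
  have hfderiv : ∀ z : ℝ, deriv f z = -(1 / zh) := fun z => (hfD z).deriv
  have hD : ∀ z : ℝ, HasDerivAt g
      (deriv f z * Real.exp (ψ z) * M (φ z)
        + f z * (Real.exp (ψ z) * deriv ψ z) * M (φ z)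
        + f z * Real.exp (ψ z) * (deriv M (φ z) * deriv φ z)) z := by
    intro z
    have h1 : HasDerivAt (fun z => Real.exp (ψ z)) (Real.exp (ψ z) * deriv ψ z) z :=
      ((hψ z).hasDerivAt.exp)
    have h2 : HasDerivAt (fun z => M (φ z)) (deriv M (φ z) * deriv φ z) z :=
      (hM (φ z)).hasDerivAt.comp z (hφ z).hasDerivAt
    have := (((hfD z).mul h1).mul h2)
    refine this.congr_deriv ?_; simp only [Pi.mul_apply]
    rw [hfderiv z]
    ring
  have hderiv : ∀ z : ℝ, deriv g z =
      deriv f z * Real.exp (ψ z) * M (φ z)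
        + f z * (Real.exp (ψ z) * deriv ψ z) * M (φ z)
        + f z * Real.exp (ψ z) * (deriv M (φ z) * deriv φ z) := fun z => (hD z).deriv
  have hftc : (∫ z in (0:ℝ)..zh, deriv g z) = g zh - g 0 := by
    apply intervalIntegral.integral_deriv_eq_sub
    · intro x _; exact (hD x).differentiableAt
    · exact hintD
  have hg0 : g 0 = M (φ 0) := by simp [hg, hf, hψ0]
  have hgzh : g zh = 0 := by
    simp [hg, hf, div_self hzh.ne']
  have hpt : ∀ z : ℝ, 0 ≤
      (1 / (2 * kN) * (f z * deriv ψ z + deriv f z)^2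
        + 1 / 2 * (f z)^2 * (deriv φ z)^2
        + 1 / 2 * Real.exp (2 * ψ z) * 𝔣 (φ z) * Q^2) + deriv g z := by
    intro z
    rw [hderiv z]
    set A := f z * deriv ψ z + deriv f z
    set E := Real.exp (ψ z)
    have hE : 0 < E := Real.exp_pos _
    set m := M (φ z)
    set m' := deriv M (φ z)
    set F := f z
    set p := deriv φ z
    have hE2 : Real.exp (2 * ψ z) = E ^ 2 := by
      rw [two_mul, Real.exp_add]; ring
    have hd := hnoforce (φ z)
    have key : 1 / (2 * kN) * A ^ 2 + 1 / 2 * F ^ 2 * p ^ 2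
        + 1 / 2 * Real.exp (2 * ψ z) * 𝔣 (φ z) * Q ^ 2
        + (deriv f z * E * m + F * (E * deriv ψ z) * m + F * E * (m' * p))
        = 1 / (2 * kN) * (A + kN * E * m) ^ 2 + 1 / 2 * (F * p + E * m') ^ 2
          + 1 / 2 * E ^ 2 * (𝔣 (φ z) * Q ^ 2 - kN * m ^ 2 - m' ^ 2) := by
      rw [hE2]
      have hA : deriv f z = A - F * deriv ψ z := by simp only [A, F]; ring
      rw [hA]
      field_simp
      ring
    rw [key]
    have h1 : 0 ≤ 1 / (2 * kN) * (A + kN * E * m) ^ 2 := by positivity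
    have h2 : 0 ≤ 1 / 2 * (F * p + E * m') ^ 2 := by positivity
    have h3 : 0 ≤ 1 / 2 * E ^ 2 * (𝔣 (φ z) * Q ^ 2 - kN * m ^ 2 - m' ^ 2) := by
      apply mul_nonneg (by positivity) hd
    linarith
  have hsum : 0 ≤ ∫ z in (0:ℝ)..zh,
      ((1 / (2 * kN) * (f z * deriv ψ z + deriv f z)^2
        + 1 / 2 * (f z)^2 * (deriv φ z)^2
        + 1 / 2 * Real.exp (2 * ψ z) * 𝔣 (φ z) * Q^2) + deriv g z) := by
    apply intervalIntegral.integral_nonneg hzh.le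
    intro u _; exact hpt u
  rw [intervalIntegral.integral_add hint hintD, hftc, hg0, hgzh] at hsum
  linarith
end

section
/- Let η be the 2k × 2k block-diagonal matrix diag(I_k, −I_k), and let φ be a real 2k × 2k matrix. Then the following are equivalent: (1) φ is symmetric positive-definite and (φη)(φη) = I (i.e., φηφη = 1, where indices are raised/lowered with η); (2) there exists a real matrix Λ with Λ η Λᵀ = η such that φ = Λ Λᵀ. -/
open Matrix
open scoped MatrixOrder

lemma aux_conj_posDef {n : Type*} [Fintype n] [DecidableEq n] {A B : Matrix n n ℝ}
    (hA : A.PosDef) (hB : IsUnit B) : (B * A * Bᴴ).PosDef := by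
  exact hA.mul_mul_conjTranspose_same (Matrix.vecMul_injective_iff_isUnit.mpr hB)

theorem stmt_16 (k : ℕ)
    (η : Matrix (Fin k ⊕ Fin k) (Fin k ⊕ Fin k) ℝ)
    (hη : η = Matrix.fromBlocks 1 0 0 (-1))
    (φ : Matrix (Fin k ⊕ Fin k) (Fin k ⊕ Fin k) ℝ) :
    (φ.IsSymm ∧ φ.PosDef ∧ φ * η * φ * η = 1) ↔
      ∃ Λ : Matrix (Fin k ⊕ Fin k) (Fin k ⊕ Fin k) ℝ,
        Λ * η * Λᵀ = η ∧ φ = Λ * Λᵀ := by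
  have hη2 : η * η = 1 := by
    subst hη
    simp [Matrix.fromBlocks_multiply, ← Matrix.fromBlocks_one]
  have hηT : ηᵀ = η := by
    subst hη
    simp [Matrix.fromBlocks_transpose]
  have hηH : ηᴴ = η := by
    rw [Matrix.conjTranspose_eq_transpose_of_trivial, hηT]
  have hηU : IsUnit η := (Matrix.isUnit_iff_isUnit_det η).mpr (Matrix.isUnit_det_of_right_inverse hη2)
  have hηdet : η.det ≠ 0 := ((Matrix.isUnit_iff_isUnit_det η).mp hηU).ne_zero
  have hη2' : ∀ Z : Matrix (Fin k ⊕ Fin k) (Fin k ⊕ Fin k) ℝ, η * (η * Z) = Z := by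
    intro Z; rw [← Matrix.mul_assoc, hη2, Matrix.one_mul]
  constructor
  · rintro ⟨hsym, hpd, hfe⟩
    have hfe' : η * φ * η * φ = 1 := by
      have h : η * (φ * η * φ * η) * η = η * 1 * η := by rw [hfe]
      simpa only [Matrix.mul_assoc, hη2, hη2', Matrix.mul_one, Matrix.one_mul] using h
    have hinv : φ⁻¹ = η * φ * η := Matrix.inv_eq_left_inv hfe'
    -- square root of φ
    set S := CFC.sqrt φ with hSdef
    have hSps : S.PosSemidef := (CFC.sqrt_nonneg φ).posSemidef
    have hSS : S * S = φ := CFC.sqrt_mul_sqrt_self φ hpd.posSemidef.nonneg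
    have hSpd : S.PosDef := by
      refine hSps.posDef_iff_isUnit.mpr ((Matrix.isUnit_iff_isUnit_det S).mpr
        (isUnit_of_mul_isUnit_left (y := S.det) ?_))
      rw [← Matrix.det_mul, hSS]
      exact (Matrix.isUnit_iff_isUnit_det φ).mp hpd.isUnit
    have hSdetU : IsUnit S.det := hSpd.det_pos.ne'.isUnit
    have hφinv_ps : (φ⁻¹).PosSemidef := hpd.inv.posSemidef
    -- S⁻¹ is the psd sqrt of φ⁻¹
    have h1 : S⁻¹ = CFC.sqrt φ⁻¹ := by
      refine ((CFC.sqrt_eq_iff _ _ hφinv_ps.nonneg hSpd.inv.posSemidef.nonneg).mpr ?_).symm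
      rw [← Matrix.mul_inv_rev, hSS]
    -- so is η * S * η
    have h2 : η * S * η = CFC.sqrt φ⁻¹ := by
      refine ((CFC.sqrt_eq_iff _ _ hφinv_ps.nonneg ?_).mpr ?_).symm
      · exact Matrix.nonneg_iff_posSemidef.mpr (by simpa [hηH, hηT] using hSps.mul_mul_conjTranspose_same η)
      · rw [hinv]
        calc η * S * η * (η * S * η) = η * (S * (η * (η * (S * η)))) := by
              simp only [Matrix.mul_assoc]
          _ = η * (S * (S * η)) := by rw [hη2']
          _ = η * φ * η := by rw [← hSS]; simp only [Matrix.mul_assoc]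
    have hkey : η * S * η = S⁻¹ := by rw [h2, h1]
    have hS' : S = η * S⁻¹ * η := by
      calc S = η * (η * (S * (η * η))) := by rw [hη2, Matrix.mul_one, hη2']
        _ = η * (η * S * η * η) := by simp only [Matrix.mul_assoc]
        _ = η * (S⁻¹ * η) := by rw [hkey]
        _ = η * S⁻¹ * η := by rw [Matrix.mul_assoc]
    have hST : Sᵀ = S := by
      rw [← Matrix.conjTranspose_eq_transpose_of_trivial, hSps.1]
    refine ⟨S, ?_, ?_⟩
    · rw [hST]
      calc S * η * S = η * S⁻¹ * η * η * S := by rw [← hS']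
        _ = η * (S⁻¹ * (η * (η * S))) := by simp only [Matrix.mul_assoc]
        _ = η * (S⁻¹ * S) := by rw [hη2']
        _ = η := by rw [Matrix.nonsing_inv_mul S hSdetU, Matrix.mul_one]
    · rw [hST, hSS]
  · rintro ⟨Λ, hΛ, rfl⟩
    have hdet2 : Λ.det * Λ.det * η.det = η.det := by
      have h := congrArg Matrix.det hΛ
      simpa [Matrix.det_mul, Matrix.det_transpose, mul_comm, mul_assoc, mul_left_comm] using h
    have hd : Λ.det ≠ 0 := by
      intro h0
      rw [h0, zero_mul, zero_mul] at hdet2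
      exact hηdet hdet2.symm
    have hΛU : IsUnit Λ := (Matrix.isUnit_iff_isUnit_det Λ).mpr (isUnit_iff_ne_zero.mpr hd)
    have hΛT : Λᵀ = η * Λ⁻¹ * η := by
      have h1 : Λ⁻¹ * (Λ * η * Λᵀ) = Λ⁻¹ * η := by rw [hΛ]
      rw [← Matrix.mul_assoc, ← Matrix.mul_assoc, Matrix.nonsing_inv_mul Λ
        (isUnit_iff_ne_zero.mpr hd), Matrix.one_mul] at h1
      calc Λᵀ = η * (η * Λᵀ) := (hη2' _).symm
        _ = η * (Λ⁻¹ * η) := by rw [h1]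
        _ = η * Λ⁻¹ * η := by rw [Matrix.mul_assoc]
    have hcancel : ∀ Z : Matrix (Fin k ⊕ Fin k) (Fin k ⊕ Fin k) ℝ, Λ⁻¹ * (Λ * Z) = Z := by
      intro Z
      rw [← Matrix.mul_assoc, Matrix.nonsing_inv_mul Λ (isUnit_iff_ne_zero.mpr hd),
        Matrix.one_mul]
    refine ⟨?_, ?_, ?_⟩
    · show (Λ * Λᵀ)ᵀ = Λ * Λᵀ
      rw [Matrix.transpose_mul, Matrix.transpose_transpose]
    · have := aux_conj_posDef (Matrix.PosDef.one) hΛU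
      simpa [Matrix.conjTranspose_eq_transpose_of_trivial] using this
    · rw [hΛT]
      calc Λ * (η * Λ⁻¹ * η) * η * (Λ * (η * Λ⁻¹ * η)) * η
          = Λ * (η * (Λ⁻¹ * (η * (η * (Λ * (η * (Λ⁻¹ * (η * η)))))))) := by
            simp only [Matrix.mul_assoc]
        _ = Λ * (η * (Λ⁻¹ * (Λ * (η * (Λ⁻¹ * 1))))) := by rw [hη2, hη2']
        _ = Λ * (η * (η * (Λ⁻¹ * 1))) := by rw [hcancel]
        _ = Λ * (Λ⁻¹ * 1) := by rw [hη2']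
        _ = 1 := by rw [Matrix.mul_one, Matrix.mul_nonsing_inv Λ (isUnit_iff_ne_zero.mpr hd)]
end
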